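/- For all g ∈ L²[0,1] and all positive integers K: Σ_{k=0}^{K-1} |g_k^K(t)|² = (1/K) Σ_{k=0}^{K-1} |g(t - k/K)|² for almost every t, where g_k^K(t) = Σ_{n∈ℤ} ⟨g, e^{2πi(nK+k)t}⟩ e^{2πi(nK+k)t}. -/

import Mathlib

/-!
With `ζ = e^{2πi/K}`, translating `g` by `j/K` multiplies its `n`-th Fourier coefficient by
`ζ^{-nj}`, and `∑_{j<K} ζ^{(k-n)j}` is `K` or `0` according as `n ≡ k (mod K)` or not. Hence
`g_k^K = K⁻¹ ∑_{j<K} ζ^{kj} g(· - j/K)`: pointwise, `(g_k^K(t))_k` is `K⁻¹` times the discrete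
Fourier transform of `(g(t - j/K))_j`, and the matrix `(ζ^{kj})_{k,j}` is `√K` times a unitary.
-/

noncomputable section

open MeasureTheory
open scoped ENNReal Real

instance : Fact ((0 : ℝ) < 1) := ⟨one_pos⟩

/-- Haar (Lebesgue) probability measure on the circle `[0,1)`. -/
abbrev μ01 : Measure (AddCircle (1 : ℝ)) := AddCircle.haarAddCircle

/-- Truncation of an `ℓ²(ℤ)` sequence to a set of coordinates. -/
def truncSeq (A : Set ℤ) (f : lp (fun _ : ℤ => ℂ) 2) : lp (fun _ : ℤ => ℂ) 2 :=
  ⟨A.indicator f, by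
    apply memℓp_gen
    refine Summable.of_nonneg_of_le (fun i => by positivity) (fun i => ?_)
      ((lp.memℓp f).summable (by norm_num))
    exact Real.rpow_le_rpow (norm_nonneg _) (norm_indicator_le_norm_self _ _) (by norm_num)⟩

/-- The orthogonal projection `Q_A` of `L²[0,1]` onto the closed span of
`{e^{2πint}}_{n ∈ A}`. -/
def QA (A : Set ℤ) (f : Lp ℂ 2 μ01) : Lp ℂ 2 μ01 :=
  fourierBasis.repr.symm (truncSeq A (fourierBasis.repr f))

/-- `g_k^K`: the sum of the Fourier series of `g` over the frequencies `nK + k`, `n ∈ ℤ`. -/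
def gkK (K k : ℕ) (g : Lp ℂ 2 μ01) : Lp ℂ 2 μ01 :=
  QA {n : ℤ | n % (K : ℤ) = (k : ℤ)} g

open Finset ComplexConjugate

theorem geom_sum_eq_ite_of_pow_eq_one {R : Type*} [DivisionRing R] [DecidableEq R] {η : R}
    {K : ℕ} (h : η ^ K = 1) : ∑ i ∈ range K, η ^ i = if η = 1 then (K : R) else 0 := by
  split_ifs with hη
  · simp [hη]
  · rw [geom_sum_eq hη, h, sub_self, zero_div]

namespace IsPrimitiveRoot

variable {ζ : ℂ} {K : ℕ}

theorem sum_pow_mul_conj_pow (hζ : IsPrimitiveRoot ζ K) {j j' : ℕ} (hj : j < K)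
    (hj' : j' < K) :
    ∑ k ∈ range K, ζ ^ (k * j) * conj (ζ ^ (k * j')) = if j = j' then (K : ℂ) else 0 := by
  have hK : K ≠ 0 := by omega
  have hinv : conj ζ = ζ⁻¹ := (Complex.inv_eq_conj (hζ.norm'_eq_one hK)).symm
  set η := ζ ^ j * (ζ ^ j')⁻¹
  have hηK : η ^ K = 1 := by
    rw [mul_pow, inv_pow, ← pow_mul, ← pow_mul, mul_comm j, mul_comm j', pow_mul, pow_mul,
      hζ.pow_eq_one, one_pow, one_pow, inv_one, mul_one]
  have hη : η = 1 ↔ j = j' := by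
    rw [mul_inv_eq_one₀ (pow_ne_zero _ (hζ.ne_zero hK))]
    exact ⟨hζ.pow_inj hj hj', by rintro rfl; rfl⟩
  have hterm : ∀ k, ζ ^ (k * j) * conj (ζ ^ (k * j')) = η ^ k := by
    intro k
    rw [map_pow, hinv, inv_pow, mul_pow, inv_pow, ← pow_mul, ← pow_mul, mul_comm j, mul_comm j']
  simp_rw [hterm, geom_sum_eq_ite_of_pow_eq_one hηK, hη]

theorem sum_norm_sq_sum_pow_mul (hζ : IsPrimitiveRoot ζ K) (v : ℕ → ℂ) :
    ∑ k ∈ range K, ‖∑ j ∈ range K, ζ ^ (k * j) * v j‖ ^ 2 = K * ∑ j ∈ range K, ‖v j‖ ^ 2 := by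
  apply Complex.ofReal_injective
  push_cast
  simp_rw [← Complex.mul_conj', map_sum, map_mul, sum_mul_sum, mul_sum]
  calc ∑ k ∈ range K, ∑ j ∈ range K, ∑ j' ∈ range K,
        ζ ^ (k * j) * v j * (conj (ζ ^ (k * j')) * conj (v j'))
      = ∑ j ∈ range K, ∑ j' ∈ range K,
          v j * conj (v j') * ∑ k ∈ range K, ζ ^ (k * j) * conj (ζ ^ (k * j')) := by
        rw [sum_comm]
        refine sum_congr rfl fun j _ => ?_
        rw [sum_comm]
        refine sum_congr rfl fun j' _ => ?_
        rw [mul_sum]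
        exact sum_congr rfl fun k _ => by ring
    _ = ∑ j ∈ range K, K * (v j * conj (v j)) := by
        refine sum_congr rfl fun j hj => ?_
        rw [sum_congr rfl fun j' hj' => by
          rw [hζ.sum_pow_mul_conj_pow (mem_range.1 hj) (mem_range.1 hj')]]
        simp [hj, mul_comm]

end IsPrimitiveRoot

section FourierCoeff

variable {T : ℝ} [Fact (0 < T)] {E : Type*} [NormedAddCommGroup E] [NormedSpace ℂ E]

theorem fourierCoeff_comp_sub (f : AddCircle T → E) (a : AddCircle T) (n : ℤ) :
    fourierCoeff (fun t => f (t - a)) n = fourier (-n) a • fourierCoeff f n := by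
  have hchar (t : AddCircle T) : fourier (-n) (t + a) = fourier (-n) a * fourier (-n) t := by
    rw [fourier_apply, fourier_apply, fourier_apply, smul_add, AddCircle.toCircle_add,
      Circle.coe_mul, mul_comm]
  rw [fourierCoeff, fourierCoeff, ← integral_smul,
    ← integral_add_right_eq_self (fun t => fourier (-n) t • f (t - a)) a]
  congr 1 with t
  rw [add_sub_cancel_right, hchar, mul_smul]

end FourierCoeff

theorem fourier_coe_natCast_div (n : ℤ) (j K : ℕ) :
    fourier n ((j / K : ℝ) : AddCircle (1 : ℝ)) =
      Complex.exp (2 * π * Complex.I / K) ^ (n * j) := by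
  rw [fourier_coe_apply, ← Complex.exp_int_mul]
  congr 1
  push_cast
  ring

section Translation

variable {T : ℝ} [Fact (0 < T)]

def translateLp (a : AddCircle T) (f : Lp ℂ 2 (AddCircle.haarAddCircle (T := T))) :
    Lp ℂ 2 (AddCircle.haarAddCircle (T := T)) :=
  Lp.compMeasurePreserving (fun t => t - a) (measurePreserving_sub_right _ a) f

theorem coeFn_translateLp (a : AddCircle T) (f : Lp ℂ 2 (AddCircle.haarAddCircle (T := T))) :
    translateLp a f =ᵐ[AddCircle.haarAddCircle] fun t => f (t - a) :=
  Lp.coeFn_compMeasurePreserving _ _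

theorem fourierBasis_repr_translateLp (a : AddCircle T)
    (f : Lp ℂ 2 (AddCircle.haarAddCircle (T := T))) (n : ℤ) :
    fourierBasis.repr (translateLp a f) n = fourier (-n) a * fourierBasis.repr f n := by
  rw [fourierBasis_repr, fourierBasis_repr, fourierCoeff_congr_ae (coeFn_translateLp a f),
    fourierCoeff_comp_sub, smul_eq_mul]

end Translation

theorem fourierBasis_repr_QA (A : Set ℤ) (f : Lp ℂ 2 μ01) (n : ℤ) :
    fourierBasis.repr (QA A f) n = A.indicator (fourierBasis.repr f) n := by
  rw [QA, LinearIsometryEquiv.apply_symm_apply]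
  rfl

theorem Int.emod_natCast_eq_iff_dvd_sub {n : ℤ} {k K : ℕ} (hk : k < K) :
    n % K = k ↔ (K : ℤ) ∣ k - n := by
  rw [← Int.modEq_iff_dvd, Int.ModEq,
    Int.emod_eq_of_lt (a := k) (by positivity) (by exact_mod_cast hk)]

theorem sum_pow_mul_fourier_neg_eq_ite {K k : ℕ} (hk : k < K) (n : ℤ) :
    ∑ j ∈ range K, Complex.exp (2 * π * Complex.I / K) ^ (k * j) *
        fourier (-n) ((j / K : ℝ) : AddCircle (1 : ℝ)) =
      if n % K = k then (K : ℂ) else 0 := by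
  have hζ := Complex.isPrimitiveRoot_exp K (by omega)
  set ζ := Complex.exp (2 * π * Complex.I / K)
  have hterm (j : ℕ) : ζ ^ (k * j) * fourier (-n) ((j / K : ℝ) : AddCircle (1 : ℝ)) =
      (ζ ^ ((k : ℤ) - n)) ^ j := by
    rw [fourier_coe_natCast_div, ← zpow_natCast, ← zpow_add₀ (hζ.ne_zero (by omega)),
      ← zpow_natCast, ← zpow_mul]
    push_cast
    ring_nf
  have hηK : (ζ ^ ((k : ℤ) - n)) ^ K = 1 := by
    rw [← zpow_natCast, ← zpow_mul, mul_comm, zpow_mul, zpow_natCast, hζ.pow_eq_one, one_zpow]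
  simp_rw [hterm, geom_sum_eq_ite_of_pow_eq_one hηK, hζ.zpow_eq_one_iff_dvd,
    Int.emod_natCast_eq_iff_dvd_sub hk]

theorem gkK_eq_smul_sum_translateLp {K k : ℕ} (hk : k < K) (g : Lp ℂ 2 μ01) :
    gkK K k g = (K : ℂ)⁻¹ • ∑ j ∈ range K, Complex.exp (2 * π * Complex.I / K) ^ (k * j) •
      translateLp ((j / K : ℝ) : AddCircle (1 : ℝ)) g := by
  apply fourierBasis.repr.injective
  ext n
  simp only [map_smul, map_sum, lp.coeFn_smul, lp.coeFn_sum, Pi.smul_apply, Finset.sum_apply,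
    smul_eq_mul, fourierBasis_repr_translateLp, gkK, fourierBasis_repr_QA]
  simp_rw [← mul_assoc, ← sum_mul, sum_pow_mul_fourier_neg_eq_ite hk]
  have hK : (K : ℂ) ≠ 0 := Nat.cast_ne_zero.2 (by omega)
  split_ifs with h <;> simp [Set.indicator, h, hK]

theorem gkK_ae_eq {K k : ℕ} (hk : k < K) (g : Lp ℂ 2 μ01) :
    ∀ᵐ t ∂μ01, gkK K k g t = (K : ℂ)⁻¹ * ∑ j ∈ range K,
      Complex.exp (2 * π * Complex.I / K) ^ (k * j) *
        g (t - ((j / K : ℝ) : AddCircle (1 : ℝ))) := by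
  set ζ := Complex.exp (2 * π * Complex.I / K)
  have hterms : ∀ᵐ t ∂μ01, ∀ j ∈ range K,
      (ζ ^ (k * j) • translateLp ((j / K : ℝ) : AddCircle (1 : ℝ)) g) t =
        ζ ^ (k * j) * g (t - ((j / K : ℝ) : AddCircle (1 : ℝ))) := by
    refine (Filter.eventually_all_finset _).2 fun j _ => ?_
    filter_upwards [Lp.coeFn_smul (E := ℂ) (ζ ^ (k * j)) _,
      coeFn_translateLp ((j / K : ℝ) : AddCircle (1 : ℝ)) g] with t hsmul htrans
    rw [hsmul, Pi.smul_apply, htrans, smul_eq_mul]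
  rw [gkK_eq_smul_sum_translateLp hk]
  filter_upwards [Lp.coeFn_smul (E := ℂ) (K : ℂ)⁻¹ _,
    Lp.coeFn_fun_finsetSum (E := ℂ) (range K) _, hterms] with t hsmul hsum hterm
  rw [hsmul, Pi.smul_apply, hsum, smul_eq_mul, sum_congr rfl hterm]

theorem sum_sq_gkK_eq (K : ℕ) (hK : 0 < K) (g : Lp ℂ 2 μ01) :
    ∀ᵐ t ∂μ01,
      ∑ k ∈ Finset.range K, ‖(gkK K k g : AddCircle (1 : ℝ) → ℂ) t‖ ^ 2 =
        (1 / (K : ℝ)) * ∑ k ∈ Finset.range K,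
          ‖(g : AddCircle (1 : ℝ) → ℂ)
              (t - (((k : ℝ) / (K : ℝ) : ℝ) : AddCircle (1 : ℝ)))‖ ^ 2 := by
  have hζ := Complex.isPrimitiveRoot_exp K hK.ne'
  filter_upwards [(Filter.eventually_all_finset (range K)).2
    fun k hk => gkK_ae_eq (mem_range.1 hk) g] with t ht
  rw [sum_congr rfl fun k hk => by rw [ht k hk]]
  simp_rw [norm_mul, mul_pow, ← mul_sum, hζ.sum_norm_sq_sum_pow_mul]
  rw [norm_inv, Complex.norm_natCast]
  field_simp
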